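/- There exist a 4-edge-connected multigraph G, a destination vertex d, and a set of 4 pairwise arc-disjoint d-rooted spanning arborescences of G⃗ such that no circular order on these arborescences and no per-source choice of initial arborescence yields a 3-resilient circular-arborescence routing. -/
import Mathlib


open scoped Classical

namespace Srr

/-- A multigraph on vertex type `V` with edge-name type `E`: every edge name is
assigned its (unordered) pair of endpoints; parallel edges are allowed. -/
structure Multigraph (V E : Type) where
  ends : E → Sym2 V

namespace Multigraph

variable {V E : Type}

/-- Walks in a multigraph. -/
inductive Walk (G : Multigraph V E) : V → V → Type
  | nil (v : V) : Walk G v v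
  | cons {u v w : V} (e : E) (h : G.ends e = s(u, v)) (p : Walk G v w) : Walk G u w

namespace Walk

/-- The edges of a walk, in order. -/
def edges {G : Multigraph V E} : ∀ {u v : V}, G.Walk u v → List E
  | _, _, nil _ => []
  | _, _, cons e _ p => e :: edges p

/-- The vertices visited by a walk, in order. -/
def support {G : Multigraph V E} : ∀ {u v : V}, G.Walk u v → List V
  | _, _, nil v => [v]
  | u, _, cons _ _ p => u :: support p

/-- A walk is a path if it visits no vertex twice. -/
def IsPath {G : Multigraph V E} {u v : V} (p : G.Walk u v) : Prop :=
  p.support.Nodup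

end Walk

/-- `G` is `k`-edge-connected: between every pair of distinct vertices there
exist `k` pairwise edge-disjoint paths. -/
def EdgeConnected (G : Multigraph V E) (k : ℕ) : Prop :=
  ∀ u v : V, u ≠ v → ∃ P : Fin k → G.Walk u v,
    (∀ i, (P i).IsPath) ∧
    ∀ i j : Fin k, i ≠ j → ∀ e : E, e ∈ (P i).edges → e ∉ (P j).edges

/-- `s` is still connected to `d` after the edges of `F` have failed. -/
def ConnAvoiding (G : Multigraph V E) (F : Finset E) (s d : V) : Prop :=
  ∃ p : G.Walk s d, ∀ e ∈ p.edges, e ∉ F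

/-- The active (non-failed) edges incident to `v`, given the failed set `F`. -/
noncomputable def activeAt [Fintype E] (G : Multigraph V E) (F : Finset E) (v : V) :
    Finset E :=
  Finset.univ.filter (fun e => v ∈ G.ends e ∧ e ∉ F)

end Multigraph

/-- A static deterministic destination-based set of routing functions: for each
vertex, a map from (incoming edge, `none` if the packet originates there;
set of active incident edges) to a chosen outgoing edge. -/
def Routing (V E : Type) : Type := V → Option E → Finset E → E

/-- Header-rewriting routing functions with a 3-bit (8-valued) header. -/
def HRouting (V E : Type) : Type := V → Option E → Finset E → Fin 8 → E × Fin 8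

/-- Duplication routing functions: the output is the set of edges along which
copies of the packet are sent. -/
def DRouting (V E : Type) : Type := V → Option E → Finset E → Finset E

/-- `σ` (the "next" map) describes a circular order on `Fin k`: iterating `σ`
from any index visits every index. -/
def IsCircularOrder {k : ℕ} (σ : Fin k → Fin k) : Prop :=
  ∀ i j : Fin k, ∃ m : ℕ, σ^[m] i = j

/-- Whether the second component (the arborescence in use) changes between
times `m` and `m+1` of a run. -/
noncomputable def switchAt {α β : Type} (run : ℕ → Option (α × β)) (m : ℕ) : Bool :=
  match run m, run (m + 1) with
  | some p, some q => decide (p.2 ≠ q.2)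
  | _, _ => false

/-- The number of switches of the second component during the first `n` steps
of a run. -/
noncomputable def switchCount {α β : Type} (run : ℕ → Option (α × β)) (n : ℕ) : ℕ :=
  ((List.range n).filter (fun m => switchAt run m)).length

namespace Multigraph

variable {V E : Type} [Fintype V] [Fintype E]

/-- One forwarding step of a packet under routing `f` and failed edge set `F`;
a state is (current vertex, incoming edge or `none`). The step is only
possible when the chosen edge is incident to the current vertex and has not
failed. -/
def RStep (G : Multigraph V E) (f : Routing V E) (F : Finset E)
    (p q : V × Option E) : Prop :=
  ∃ w : V,
    f p.1 p.2 (G.activeAt F p.1) ∉ F ∧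
    G.ends (f p.1 p.2 (G.activeAt F p.1)) = s(p.1, w) ∧
    q = (w, some (f p.1 p.2 (G.activeAt F p.1)))

/-- Under failed edges `F`, a packet originated at `s` reaches `d` in finitely
many steps. -/
def Delivers (G : Multigraph V E) (f : Routing V E) (F : Finset E) (d s : V) : Prop :=
  ∃ i : Option E, Relation.ReflTransGen (G.RStep f F) (s, none) (d, i)

/-- `f` is a `k`-resilient routing towards destination `d`. -/
def Resilient (G : Multigraph V E) (f : Routing V E) (d : V) (k : ℕ) : Prop :=
  ∀ F : Finset E, F.card ≤ k → ∀ s : V, G.ConnAvoiding F s d → G.Delivers f F d s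

/-- A `d`-rooted spanning arborescence of the directed copy of `G`: every
vertex `v ≠ d` has exactly one outgoing arc, which goes along the edge
`edge v` towards `parent v`; `d` has no outgoing arc; following `parent`
from any vertex reaches `d` (hence every vertex has a unique directed path
to `d` in the arborescence). -/
structure Arborescence (G : Multigraph V E) (d : V) where
  parent : V → V
  edge : V → E
  parent_root : parent d = d
  ends_eq : ∀ v : V, v ≠ d → G.ends (edge v) = s(v, parent v)
  reaches_root : ∀ v : V, ∃ n : ℕ, parent^[n] v = d

namespace Arborescence

/-- Two arborescences are arc-disjoint: no directed arc (identified by its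
tail vertex together with the underlying edge) lies in both. -/
def ArcDisjoint {G : Multigraph V E} {d : V} (T₁ T₂ : G.Arborescence d) : Prop :=
  ∀ v : V, v ≠ d → T₁.edge v ≠ T₂.edge v

/-- `T₁` and `T₂` share an edge `{v,w}` of `G` if the arc `(v,w)` is in `T₁`
and the reversed arc `(w,v)` (of the same underlying edge) is in `T₂`. -/
def SharesEdge {G : Multigraph V E} {d : V} (T₁ T₂ : G.Arborescence d) : Prop :=
  ∃ v w : V, v ≠ d ∧ w ≠ d ∧
    T₁.parent v = w ∧ T₂.parent w = v ∧ T₁.edge v = T₂.edge w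

/-- The unique directed path in `T` from `u` to `d` contains no failed edge. -/
def GoodFrom {G : Multigraph V E} {d : V} (T : G.Arborescence d)
    (F : Finset E) (u : V) : Prop :=
  ∀ n : ℕ, T.parent^[n] u ≠ d → T.edge (T.parent^[n] u) ∉ F

end Arborescence

/-- The next arborescence used at vertex `v` when the current one is `i`: the
first arborescence in the circular order (starting with `i` itself) whose
outgoing edge at `v` has not failed, if any. -/
noncomputable def nextIdx (G : Multigraph V E) {k : ℕ} {d : V}
    (T : Fin k → G.Arborescence d) (σ : Fin k → Fin k) (F : Finset E)
    (v : V) (i : Fin k) : Option (Fin k) :=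
  ((List.range k).map (fun m => σ^[m] i)).find? (fun j => decide ((T j).edge v ∉ F))

/-- One step of circular-arborescence routing; a state is
(current vertex, current arborescence). -/
noncomputable def caStep (G : Multigraph V E) {k : ℕ} {d : V}
    (T : Fin k → G.Arborescence d) (σ : Fin k → Fin k) (F : Finset E)
    (p : V × Fin k) : Option (V × Fin k) :=
  if p.1 = d then none
  else (G.nextIdx T σ F p.1 p.2).map (fun j => ((T j).parent p.1, j))

/-- The trajectory of a packet under circular-arborescence routing, starting
at `s` on arborescence `i₀`. -/
noncomputable def caRun (G : Multigraph V E) {k : ℕ} {d : V}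
    (T : Fin k → G.Arborescence d) (σ : Fin k → Fin k) (F : Finset E)
    (s : V) (i₀ : Fin k) : ℕ → Option (V × Fin k)
  | 0 => some (s, i₀)
  | n + 1 => (G.caRun T σ F s i₀ n).bind (G.caStep T σ F)

/-- One step of the two-phase routing `R` built from `m+1` arborescences:
in state `(v, none)` the packet is routed canonically along the last
arborescence `T (Fin.last m)`; when it hits a failed edge `{x,y}` there, it
switches to the circular-arborescence routing on the first `m` arborescences,
starting from the one containing the reversed arc `(y,x)`; states `(v, some i)`
perform this circular routing. -/
noncomputable def rStep2 (G : Multigraph V E) {m : ℕ} {d : V}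
    (T : Fin (m + 1) → G.Arborescence d) (σ : Fin m → Fin m) (F : Finset E)
    (p : V × Option (Fin m)) : Option (V × Option (Fin m)) :=
  if p.1 = d then none
  else
    match p.2 with
    | none =>
        if (T (Fin.last m)).edge p.1 ∈ F then
          ((List.finRange m).find? (fun j =>
              decide ((T j.castSucc).edge ((T (Fin.last m)).parent p.1) =
                  (T (Fin.last m)).edge p.1 ∧
                (T j.castSucc).parent ((T (Fin.last m)).parent p.1) = p.1))).map
            (fun j => (p.1, some j))
        else some ((T (Fin.last m)).parent p.1, none)
    | some i =>
        (G.nextIdx (fun j => T j.castSucc) σ F p.1 i).map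
          (fun j => ((T j.castSucc).parent p.1, some j))

/-- The trajectory of a packet under the two-phase routing `R`. -/
noncomputable def rRun2 (G : Multigraph V E) {m : ℕ} {d : V}
    (T : Fin (m + 1) → G.Arborescence d) (σ : Fin m → Fin m) (F : Finset E)
    (s : V) : ℕ → Option (V × Option (Fin m))
  | 0 => some (s, none)
  | n + 1 => (G.rRun2 T σ F s n).bind (G.rStep2 T σ F)

/-- `π` is a circular ordering of the edges incident to `v`. -/
def IsCircAt (G : Multigraph V E) (v : V) (π : E → E) : Prop :=
  (∀ e : E, v ∈ G.ends e → v ∈ G.ends (π e)) ∧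
  (∀ e : E, ¬ v ∈ G.ends e → π e = e) ∧
  (∀ e e' : E, v ∈ G.ends e → v ∈ G.ends e' → ∃ m : ℕ, π^[m] e = e')

/-- The first non-failed edge strictly after `e` in the circular order `π`
among the active edges `A`. -/
noncomputable def nextCirc (π : E → E) (e : E) (A : Finset E) : Option E :=
  ((List.range (Fintype.card E)).map (fun m => π^[m + 1] e)).find?
    (fun e' => decide (e' ∈ A))

/-- A routing is vertex-circular: every vertex has a circular ordering of its
incident edges, and a packet received along `e` is forwarded through the next
non-failed edge after `e` in this circular order. -/
def IsVertexCircular (G : Multigraph V E) (f : Routing V E) : Prop :=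
  ∀ v : V, ∃ π : E → E, G.IsCircAt v π ∧
    ∀ e : E, v ∈ G.ends e → ∀ A : Finset E, ∀ r : E,
      nextCirc π e A = some r → f v (some e) A = r

/-- A routing is vertex-connectivity-resilient: every packet originated at a
vertex having `k` pairwise edge-disjoint paths to `d` reaches `d` whenever
fewer than `k` edges fail. -/
def VertexConnResilient (G : Multigraph V E) (d : V) (f : Routing V E) : Prop :=
  ∀ v : V, ∀ k : ℕ,
    (∃ P : Fin k → G.Walk v d, (∀ i, (P i).IsPath) ∧
      ∀ i j : Fin k, i ≠ j → ∀ e : E, e ∈ (P i).edges → e ∉ (P j).edges) →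
    ∀ F : Finset E, F.card < k → G.Delivers f F d v

/-- One step of header-rewriting routing; a state is
(current vertex, incoming edge, current 3-bit header). -/
def HStep (G : Multigraph V E) (f : HRouting V E) (F : Finset E)
    (p q : V × Option E × Fin 8) : Prop :=
  ∃ w : V,
    (f p.1 p.2.1 (G.activeAt F p.1) p.2.2).1 ∉ F ∧
    G.ends (f p.1 p.2.1 (G.activeAt F p.1) p.2.2).1 = s(p.1, w) ∧
    q = (w, some (f p.1 p.2.1 (G.activeAt F p.1) p.2.2).1,
         (f p.1 p.2.1 (G.activeAt F p.1) p.2.2).2)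

/-- The endpoint of `e` other than `v` (an arbitrary vertex if `e` is not
incident to `v`; `v` itself if `e` is a loop at `v`). -/
noncomputable def otherEnd (G : Multigraph V E) (v : V) (e : E) : V :=
  if h : ∃ w : V, G.ends e = s(v, w) then h.choose else v

/-- The copies produced from packet state `p` in one step of duplication
routing: one copy along each chosen non-failed incident edge; no copies once
the packet is at `d`. -/
noncomputable def dchildren (G : Multigraph V E) (f : DRouting V E) (F : Finset E)
    (d : V) (p : V × Option E) : Multiset (V × Option E) :=
  if p.1 = d then 0
  else ((f p.1 p.2 (G.activeAt F p.1) ∩ G.activeAt F p.1).val.map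
      (fun e => (G.otherEnd p.1 e, some e)))

/-- The multiset of packet-copy states after `n` steps of duplication routing
of a packet originated at `s`. -/
noncomputable def dlevel (G : Multigraph V E) (f : DRouting V E) (F : Finset E)
    (d : V) (s : V) : ℕ → Multiset (V × Option E)
  | 0 => {(s, none)}
  | n + 1 => (G.dlevel f F d s n).bind (G.dchildren f F d)

/-- The total number of new copies of the packet created during the first `N`
steps of duplication routing. -/
noncomputable def dcreated (G : Multigraph V E) (f : DRouting V E) (F : Finset E)
    (d : V) (s : V) (N : ℕ) : ℕ :=
  ∑ n ∈ Finset.range N,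
    ((G.dlevel f F d s n).map (fun p => (G.dchildren f F d p).card - 1)).sum

/-- Two vertices are joined by a walk in the multigraph. -/
def Reach (G : Multigraph V E) : V → V → Prop :=
  Relation.ReflTransGen (fun u v => ∃ e : E, G.ends e = s(u, v))

/-- The connected component of `v`. -/
noncomputable def compOf (G : Multigraph V E) (v : V) : Finset V :=
  Finset.univ.filter (fun w => G.Reach v w)

/-- The edges with all endpoints inside `S`. -/
noncomputable def edgesIn (G : Multigraph V E) (S : Finset V) : Finset E :=
  Finset.univ.filter (fun e => ∀ x ∈ G.ends e, x ∈ S)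

/-- A set of vertices forms a tree component: it is connected, carries no
self-loop, and the number of its edges is its number of vertices minus one. -/
def IsTreeComp (G : Multigraph V E) (S : Finset V) : Prop :=
  (∀ u ∈ S, ∀ w ∈ S, G.Reach u w) ∧
  (∀ e ∈ G.edgesIn S, ¬ (G.ends e).IsDiag) ∧
  (G.edgesIn S).card = S.card - 1

end Multigraph

/-- The multigraph associated with a simple graph: the edge names are the
edges of the simple graph. -/
def toMG {W : Type} (G : SimpleGraph W) : Multigraph W G.edgeSet :=
  ⟨fun e => (e : Sym2 W)⟩

/-- A simple graph is planar: it has an embedding in the plane. Vertices are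
mapped to distinct points, every edge to a simple continuous arc between the
images of its endpoints, arcs pass through no other vertex, and two distinct
arcs may only meet at images of vertices (hence only at shared endpoints). -/
def IsPlanar {W : Type} (G : SimpleGraph W) : Prop :=
  ∃ (p : W → ℝ × ℝ) (arc : W → W → Set (ℝ × ℝ)),
    Function.Injective p ∧
    (∀ u v : W, arc u v = arc v u) ∧
    (∀ u v : W, G.Adj u v → ∃ γ : ℝ → ℝ × ℝ,
      ContinuousOn γ (Set.Icc 0 1) ∧ Set.InjOn γ (Set.Icc 0 1) ∧
      γ 0 = p u ∧ γ 1 = p v ∧ arc u v = γ '' Set.Icc 0 1) ∧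
    (∀ u v w : W, G.Adj u v → p w ∈ arc u v → w = u ∨ w = v) ∧
    (∀ u v x y : W, G.Adj u v → G.Adj x y → s(u, v) ≠ s(x, y) →
      arc u v ∩ arc x y ⊆ Set.range p)

end Srr

namespace Srr


set_option linter.unusedSectionVars false

namespace Multigraph

variable {V E : Type} [Fintype V] [Fintype E]

/-- Walks specified by a list of (edge, next vertex) steps. -/
def listWalk (G : Multigraph V E) [DecidableEq V] :
    ∀ (u v : V) (l : List (E × V)), Option (G.Walk u v)
  | u, v, [] => if h : u = v then some (h ▸ Walk.nil u) else none
  | u, v, (e, w) :: l =>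
    if h : G.ends e = s(u, w) then (listWalk G w v l).map (Walk.cons e h) else none

theorem listWalk_spec (G : Multigraph V E) [DecidableEq V] :
    ∀ (u v : V) (l : List (E × V)) (p : G.Walk u v), listWalk G u v l = some p →
      p.edges = l.map Prod.fst ∧ p.support = u :: l.map Prod.snd := by
  intro u v l
  induction l generalizing u with
  | nil =>
    intro p hp
    rw [listWalk] at hp
    split at hp
    · rename_i h; subst h; cases hp; exact ⟨rfl, rfl⟩
    · cases hp
  | cons a l ih =>
    intro p hp
    obtain ⟨e, w⟩ := a
    rw [listWalk] at hp
    split at hp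
    · rename_i h
      obtain ⟨q, hq, rfl⟩ := Option.map_eq_some_iff.mp hp
      obtain ⟨h1, h2⟩ := ih w q hq
      constructor
      · show e :: q.edges = _; rw [h1]; rfl
      · show u :: q.support = _; rw [h2]; rfl
    · cases hp

theorem conn_of_list (G : Multigraph V E) [DecidableEq V] (F : Finset E) (s d : V)
    (l : List (E × V)) (h1 : (G.listWalk s d l).isSome = true)
    (h2 : ∀ e ∈ l.map Prod.fst, e ∉ F) : G.ConnAvoiding F s d := by
  obtain ⟨p, hp⟩ := Option.isSome_iff_exists.mp h1
  obtain ⟨he, -⟩ := listWalk_spec G s d l p hp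
  exact ⟨p, by rw [he]; exact h2⟩

theorem edgeConnected_of (G : Multigraph V E) [DecidableEq V] (k : ℕ)
    (tbl : V → V → Fin k → List (E × V))
    (h1 : ∀ u v : V, u ≠ v → ∀ i, (G.listWalk u v (tbl u v i)).isSome = true)
    (h2 : ∀ u v : V, u ≠ v → ∀ i, (u :: (tbl u v i).map Prod.snd).Nodup)
    (h3 : ∀ u v : V, u ≠ v → ∀ i j : Fin k, i ≠ j →
      ∀ e ∈ (tbl u v i).map Prod.fst, e ∉ (tbl u v j).map Prod.fst) :
    G.EdgeConnected k := by
  intro u v huv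
  have hsp : ∀ i, ((G.listWalk u v (tbl u v i)).get (h1 u v huv i)).edges
        = (tbl u v i).map Prod.fst ∧
      ((G.listWalk u v (tbl u v i)).get (h1 u v huv i)).support
        = u :: (tbl u v i).map Prod.snd :=
    fun i => listWalk_spec G u v (tbl u v i) _ (Option.eq_some_of_isSome (h1 u v huv i))
  refine ⟨fun i => (G.listWalk u v (tbl u v i)).get (h1 u v huv i), fun i => ?_, ?_⟩
  · show _root_.List.Nodup _
    rw [(hsp i).2]
    exact h2 u v huv i
  · intro i j hij e hei
    rw [(hsp i).1] at hei
    rw [(hsp j).1]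
    exact h3 u v huv i j hij e hei

/-- A computable twin of `nextIdx`. -/
def nextIdx' [DecidableEq E] (G : Multigraph V E) {k : ℕ} {d : V}
    (T : Fin k → G.Arborescence d) (σ : Fin k → Fin k) (F : Finset E)
    (v : V) (i : Fin k) : Option (Fin k) :=
  ((List.range k).map (fun m => σ^[m] i)).find? (fun j => decide ((T j).edge v ∉ F))

/-- A computable twin of `caStep`. -/
def caStep' [DecidableEq V] [DecidableEq E] (G : Multigraph V E) {k : ℕ} {d : V}
    (T : Fin k → G.Arborescence d) (σ : Fin k → Fin k) (F : Finset E)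
    (p : V × Fin k) : Option (V × Fin k) :=
  if p.1 = d then none
  else (G.nextIdx' T σ F p.1 p.2).map (fun j => ((T j).parent p.1, j))

/-- A computable twin of `caRun`. -/
def caRun' [DecidableEq V] [DecidableEq E] (G : Multigraph V E) {k : ℕ} {d : V}
    (T : Fin k → G.Arborescence d) (σ : Fin k → Fin k) (F : Finset E)
    (s : V) (i₀ : Fin k) : ℕ → Option (V × Fin k)
  | 0 => some (s, i₀)
  | n + 1 => (G.caRun' T σ F s i₀ n).bind (G.caStep' T σ F)

theorem caRun'_eq [DecidableEq V] [DecidableEq E] (G : Multigraph V E) {k : ℕ} {d : V}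
    (T : Fin k → G.Arborescence d) (σ : Fin k → Fin k) (F : Finset E)
    (s : V) (i₀ : Fin k) (n : ℕ) :
    G.caRun T σ F s i₀ n = G.caRun' T σ F s i₀ n := by
  have hni : ∀ (v : V) (i : Fin k), G.nextIdx T σ F v i = G.nextIdx' T σ F v i := by
    intro v i
    unfold nextIdx nextIdx'
    congr 1
    funext j
    exact decide_eq_decide.mpr Iff.rfl
  have hcs : G.caStep T σ F = G.caStep' T σ F := by
    funext p
    by_cases h : p.1 = d
    · simp [caStep, caStep', h]
    · simp [caStep, caStep', h, hni]
  induction n with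
  | zero => rfl
  | succ n ih =>
    show (G.caRun T σ F s i₀ n).bind (G.caStep T σ F) = _
    rw [ih, hcs]
    rfl

/-- If the circular-arborescence run is eventually periodic and never visits the
destination within one full period, the packet never reaches the destination. -/
theorem no_reach [DecidableEq V] [DecidableEq E] (G : Multigraph V E) {k : ℕ} {d : V}
    (T : Fin k → G.Arborescence d) (σ : Fin k → Fin k) (F : Finset E)
    (s : V) (i₀ : Fin k) (N m : ℕ) (hm : m < N)
    (hper : G.caRun' T σ F s i₀ N = G.caRun' T σ F s i₀ m)
    (hnd : ∀ r < N, ∀ p : V × Fin k, G.caRun' T σ F s i₀ r = some p → p.1 ≠ d) :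
    ¬ ∃ (n : ℕ) (p : V × Fin k), G.caRun T σ F s i₀ n = some p ∧ p.1 = d := by
  have key : ∀ n : ℕ, ∃ r < N, G.caRun' T σ F s i₀ n = G.caRun' T σ F s i₀ r := by
    intro n
    induction n with
    | zero => exact ⟨0, Nat.lt_of_le_of_lt (Nat.zero_le m) hm, rfl⟩
    | succ n ih =>
      obtain ⟨r, hr, he⟩ := ih
      have step : G.caRun' T σ F s i₀ (n + 1) = G.caRun' T σ F s i₀ (r + 1) := by
        show (G.caRun' T σ F s i₀ n).bind (G.caStep' T σ F)
            = (G.caRun' T σ F s i₀ r).bind (G.caStep' T σ F)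
        rw [he]
      by_cases h : r + 1 < N
      · exact ⟨r + 1, h, step⟩
      · have hrN : r + 1 = N := by omega
        rw [hrN] at step
        exact ⟨m, hm, step.trans hper⟩
  rintro ⟨n, p, hp, hd⟩
  rw [caRun'_eq] at hp
  obtain ⟨r, hr, he⟩ := key n
  exact hnd r hr p (he ▸ hp) hd

end Multigraph

private theorem tuple6 : ∀ a b c d : Fin 4,
    a ≠ b → a ≠ c → a ≠ d → b ≠ c → b ≠ d → c ≠ d →
    a ≠ 0 → b ≠ 1 → c ≠ 2 → d ≠ 3 →
    ![a, b, c, d] a ≠ 0 →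
    (a, b, c, d) = (1, 2, 3, 0) ∨ (a, b, c, d) = (1, 3, 0, 2) ∨
    (a, b, c, d) = (2, 3, 1, 0) ∨ (a, b, c, d) = (2, 0, 3, 1) ∨
    (a, b, c, d) = (3, 2, 0, 1) ∨ (a, b, c, d) = (3, 0, 1, 2) := by decide

private theorem funext4 {σ τ : Fin 4 → Fin 4} (h0 : σ 0 = τ 0) (h1 : σ 1 = τ 1)
    (h2 : σ 2 = τ 2) (h3 : σ 3 = τ 3) : σ = τ := by
  funext x
  have : x = 0 ∨ x = 1 ∨ x = 2 ∨ x = 3 := by omega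
  rcases this with rfl | rfl | rfl | rfl <;> assumption

private theorem apply4 (σ : Fin 4 → Fin 4) (x : Fin 4) : ![σ 0, σ 1, σ 2, σ 3] x = σ x := by
  have : x = 0 ∨ x = 1 ∨ x = 2 ∨ x = 3 := by omega
  rcases this with rfl | rfl | rfl | rfl <;> rfl

/-- A circular order on `Fin 4` is one of the six 4-cycles. -/
theorem sigma_classify {σ : Fin 4 → Fin 4} (hσ : IsCircularOrder σ) :
    σ = ![1, 2, 3, 0] ∨ σ = ![1, 3, 0, 2] ∨ σ = ![2, 3, 1, 0] ∨
    σ = ![2, 0, 3, 1] ∨ σ = ![3, 2, 0, 1] ∨ σ = ![3, 0, 1, 2] := by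
  have surj : Function.Surjective σ := by
    intro j
    obtain ⟨m, hm⟩ := hσ (σ j) j
    refine ⟨σ^[m] j, ?_⟩
    rw [← Function.iterate_succ_apply' σ m j, Function.iterate_succ_apply]
    exact hm
  have inj : Function.Injective σ := Finite.injective_iff_surjective.mpr surj
  have nofix : ∀ i, σ i ≠ i := by
    intro i h
    obtain ⟨m, hm⟩ := hσ i (i + 1)
    rw [Function.iterate_fixed h] at hm
    omega
  have k0 : σ (σ 0) ≠ 0 := by
    intro h
    have claim : ∀ m : ℕ, σ^[m] 0 = 0 ∨ σ^[m] 0 = σ 0 := by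
      intro m
      induction m with
      | zero => exact Or.inl rfl
      | succ m ih =>
        rw [Function.iterate_succ_apply']
        rcases ih with h' | h'
        · right; rw [h']
        · left; rw [h', h]
    by_cases hc : σ 0 = 1
    · obtain ⟨m, hm⟩ := hσ 0 2
      rcases claim m with h' | h' <;> rw [hm] at h'
      · exact absurd h' (by decide)
      · rw [hc] at h'; exact absurd h' (by decide)
    · obtain ⟨m, hm⟩ := hσ 0 1
      rcases claim m with h' | h' <;> rw [hm] at h'
      · exact absurd h' (by decide)
      · exact hc h'.symm
  have ne' : ∀ i j : Fin 4, i ≠ j → σ i ≠ σ j := fun i j hij h => hij (inj h)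
  have := tuple6 (σ 0) (σ 1) (σ 2) (σ 3)
    (ne' 0 1 (by decide)) (ne' 0 2 (by decide)) (ne' 0 3 (by decide))
    (ne' 1 2 (by decide)) (ne' 1 3 (by decide)) (ne' 2 3 (by decide))
    (nofix 0) (nofix 1) (nofix 2) (nofix 3) (by rw [apply4]; exact k0)
  simp only [Prod.mk.injEq] at this
  rcases this with ⟨e0, e1, e2, e3⟩ | ⟨e0, e1, e2, e3⟩ | ⟨e0, e1, e2, e3⟩ |
    ⟨e0, e1, e2, e3⟩ | ⟨e0, e1, e2, e3⟩ | ⟨e0, e1, e2, e3⟩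
  · exact Or.inl (funext4 e0 e1 e2 e3)
  · exact Or.inr (Or.inl (funext4 e0 e1 e2 e3))
  · exact Or.inr (Or.inr (Or.inl (funext4 e0 e1 e2 e3)))
  · exact Or.inr (Or.inr (Or.inr (Or.inl (funext4 e0 e1 e2 e3))))
  · exact Or.inr (Or.inr (Or.inr (Or.inr (Or.inl (funext4 e0 e1 e2 e3)))))
  · exact Or.inr (Or.inr (Or.inr (Or.inr (Or.inr (funext4 e0 e1 e2 e3)))))

/-- The counterexample multigraph: 6 vertices, 15 edges. -/
def Gex : Multigraph (Fin 6) (Fin 15) :=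
  ⟨![s(4, 3), s(2, 1), s(1, 4), s(1, 3), s(2, 4), s(4, 0), s(4, 0), s(1, 5),
     s(5, 0), s(5, 4), s(2, 4), s(3, 2), s(3, 5), s(2, 1), s(1, 0)]⟩

def ar0 : Gex.Arborescence 0 where
  parent := ![0, 5, 1, 4, 0, 3]
  edge := ![0, 7, 13, 0, 5, 12]
  parent_root := rfl
  ends_eq := by decide
  reaches_root := fun v => ⟨6, by revert v; decide⟩

def ar1 : Gex.Arborescence 0 where
  parent := ![0, 0, 4, 1, 3, 1]
  edge := ![0, 14, 10, 3, 0, 7]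
  parent_root := rfl
  ends_eq := by decide
  reaches_root := fun v => ⟨6, by revert v; decide⟩

def ar2 : Gex.Arborescence 0 where
  parent := ![0, 3, 4, 5, 1, 0]
  edge := ![0, 3, 4, 12, 2, 8]
  parent_root := rfl
  ends_eq := by decide
  reaches_root := fun v => ⟨6, by revert v; decide⟩

def ar3 : Gex.Arborescence 0 where
  parent := ![0, 4, 1, 2, 0, 4]
  edge := ![0, 2, 1, 11, 6, 9]
  parent_root := rfl
  ends_eq := by decide
  reaches_root := fun v => ⟨6, by revert v; decide⟩

/-- The four arc-disjoint `0`-rooted spanning arborescences. -/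
def Tex : Fin 4 → Gex.Arborescence 0 := ![ar0, ar1, ar2, ar3]

/-- Four pairwise edge-disjoint simple paths between every ordered pair. -/
def tblEx : Fin 6 → Fin 6 → Fin 4 → List (Fin 15 × Fin 6) :=
![
   ![![[], [], [], []],
     ![[(5, 4), (0, 3), (3, 1)], [(6, 4), (2, 1)], [(8, 5), (7, 1)], [(14, 1)]],
     ![[(5, 4), (4, 2)], [(6, 4), (10, 2)], [(8, 5), (7, 1), (1, 2)], [(14, 1), (13, 2)]],
     ![[(5, 4), (0, 3)], [(6, 4), (4, 2), (11, 3)], [(8, 5), (12, 3)], [(14, 1), (3, 3)]],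
     ![[(5, 4)], [(6, 4)], [(8, 5), (9, 4)], [(14, 1), (2, 4)]],
     ![[(5, 4), (0, 3), (12, 5)], [(6, 4), (9, 5)], [(8, 5)], [(14, 1), (7, 5)]]],
   ![![[(1, 2), (4, 4), (5, 0)], [(2, 4), (6, 0)], [(7, 5), (8, 0)], [(14, 0)]],
     ![[], [], [], []],
     ![[(1, 2)], [(2, 4), (4, 2)], [(3, 3), (11, 2)], [(13, 2)]],
     ![[(1, 2), (11, 3)], [(2, 4), (0, 3)], [(3, 3)], [(7, 5), (12, 3)]],
     ![[(1, 2), (4, 4)], [(2, 4)], [(3, 3), (0, 4)], [(7, 5), (9, 4)]],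
     ![[(2, 4), (9, 5)], [(3, 3), (12, 5)], [(7, 5)], [(14, 0), (8, 5)]]],
   ![![[(1, 1), (14, 0)], [(4, 4), (5, 0)], [(10, 4), (6, 0)], [(11, 3), (12, 5), (8, 0)]],
     ![[(1, 1)], [(4, 4), (2, 1)], [(11, 3), (3, 1)], [(13, 1)]],
     ![[], [], [], []],
     ![[(1, 1), (3, 3)], [(4, 4), (0, 3)], [(10, 4), (9, 5), (12, 3)], [(11, 3)]],
     ![[(1, 1), (2, 4)], [(4, 4)], [(10, 4)], [(11, 3), (0, 4)]],
     ![[(1, 1), (7, 5)], [(4, 4), (5, 0), (8, 5)], [(10, 4), (9, 5)], [(11, 3), (12, 5)]]],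
   ![![[(0, 4), (5, 0)], [(3, 1), (14, 0)], [(11, 2), (4, 4), (6, 0)], [(12, 5), (8, 0)]],
     ![[(0, 4), (2, 1)], [(3, 1)], [(11, 2), (1, 1)], [(12, 5), (7, 1)]],
     ![[(0, 4), (4, 2)], [(3, 1), (1, 2)], [(11, 2)], [(12, 5), (7, 1), (13, 2)]],
     ![[], [], [], []],
     ![[(0, 4)], [(3, 1), (2, 4)], [(11, 2), (4, 4)], [(12, 5), (9, 4)]],
     ![[(0, 4), (9, 5)], [(3, 1), (7, 5)], [(11, 2), (1, 1), (14, 0), (8, 5)], [(12, 5)]]],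
   ![![[(2, 1), (14, 0)], [(5, 0)], [(6, 0)], [(9, 5), (8, 0)]],
     ![[(0, 3), (3, 1)], [(2, 1)], [(4, 2), (1, 1)], [(5, 0), (14, 1)]],
     ![[(0, 3), (11, 2)], [(2, 1), (1, 2)], [(4, 2)], [(10, 2)]],
     ![[(0, 3)], [(2, 1), (3, 3)], [(4, 2), (11, 3)], [(9, 5), (12, 3)]],
     ![[], [], [], []],
     ![[(0, 3), (12, 5)], [(2, 1), (7, 5)], [(5, 0), (8, 5)], [(9, 5)]]],
   ![![[(7, 1), (14, 0)], [(8, 0)], [(9, 4), (5, 0)], [(12, 3), (0, 4), (6, 0)]],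
     ![[(7, 1)], [(8, 0), (14, 1)], [(9, 4), (2, 1)], [(12, 3), (3, 1)]],
     ![[(7, 1), (1, 2)], [(8, 0), (5, 4), (4, 2)], [(9, 4), (10, 2)], [(12, 3), (11, 2)]],
     ![[(7, 1), (3, 3)], [(8, 0), (5, 4), (0, 3)], [(9, 4), (4, 2), (11, 3)], [(12, 3)]],
     ![[(7, 1), (2, 4)], [(8, 0), (5, 4)], [(9, 4)], [(12, 3), (0, 4)]],
     ![[], [], [], []]]]

set_option maxHeartbeats 4000000 in
theorem GexEC : Gex.EdgeConnected 4 :=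
  Gex.edgeConnected_of 4 tblEx (by decide) (by decide) (by decide)

/-- There are a `4`-edge-connected multigraph, a destination `d` and `4`
pairwise arc-disjoint `d`-rooted spanning arborescences such that no circular
order on them and no choice of initial arborescences gives a `3`-resilient
circular-arborescence routing. -/
theorem statement_1 :
    ∃ (nV nE : ℕ) (G : Multigraph (Fin nV) (Fin nE)) (d : Fin nV)
      (T : Fin 4 → G.Arborescence d),
      G.EdgeConnected 4 ∧
      (∀ i j : Fin 4, i ≠ j → (T i).ArcDisjoint (T j)) ∧
      ∀ σ : Fin 4 → Fin 4, IsCircularOrder σ →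
        ∀ init : Fin nV → Fin 4,
          ¬ (∀ F : Finset (Fin nE), F.card ≤ 3 →
              ∀ s : Fin nV, G.ConnAvoiding F s d →
                ∃ (n : ℕ) (p : Fin nV × Fin 4),
                  G.caRun T σ F s (init s) n = some p ∧ p.1 = d) := by
  have hAD : ∀ i j : Fin 4, i ≠ j → ∀ v : Fin 6, v ≠ 0 →
      (Tex i).edge v ≠ (Tex j).edge v := by decide
  refine ⟨6, 15, Gex, 0, Tex, GexEC, fun i j hij v hv => hAD i j hij v hv, ?_⟩
  intro σ hσ
  rcases sigma_classify hσ with rfl | rfl | rfl | rfl | rfl | rfl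
  · intro init H
    have h4 : init 1 = 0 ∨ init 1 = 1 ∨ init 1 = 2 ∨ init 1 = 3 := by omega
    rcases h4 with h | h | h | h
    · obtain ⟨n, p, hp, hd⟩ := H {1, 12, 14} (by decide) 1
        (Gex.conn_of_list {1, 12, 14} 1 0 [(2, 4), (5, 0)] (by decide) (by decide))
      rw [h] at hp
      exact Gex.no_reach Tex ![1, 2, 3, 0] {1, 12, 14} 1 0 5 0
        (by omega) (by decide) (by decide) ⟨n, p, hp, hd⟩
    · obtain ⟨n, p, hp, hd⟩ := H {1, 12, 14} (by decide) 1
        (Gex.conn_of_list {1, 12, 14} 1 0 [(2, 4), (5, 0)] (by decide) (by decide))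
      rw [h] at hp
      exact Gex.no_reach Tex ![1, 2, 3, 0] {1, 12, 14} 1 1 5 0
        (by omega) (by decide) (by decide) ⟨n, p, hp, hd⟩
    · obtain ⟨n, p, hp, hd⟩ := H {1, 12, 14} (by decide) 1
        (Gex.conn_of_list {1, 12, 14} 1 0 [(2, 4), (5, 0)] (by decide) (by decide))
      rw [h] at hp
      exact Gex.no_reach Tex ![1, 2, 3, 0] {1, 12, 14} 1 2 6 1
        (by omega) (by decide) (by decide) ⟨n, p, hp, hd⟩
    · obtain ⟨n, p, hp, hd⟩ := H {2, 12, 14} (by decide) 1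
        (Gex.conn_of_list {2, 12, 14} 1 0 [(7, 5), (8, 0)] (by decide) (by decide))
      rw [h] at hp
      exact Gex.no_reach Tex ![1, 2, 3, 0] {2, 12, 14} 1 3 5 0
        (by omega) (by decide) (by decide) ⟨n, p, hp, hd⟩
  · intro init H
    have h4 : init 2 = 0 ∨ init 2 = 1 ∨ init 2 = 2 ∨ init 2 = 3 := by omega
    rcases h4 with h | h | h | h
    · obtain ⟨n, p, hp, hd⟩ := H {0, 1, 3} (by decide) 2
        (Gex.conn_of_list {0, 1, 3} 2 0 [(4, 4), (5, 0)] (by decide) (by decide))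
      rw [h] at hp
      exact Gex.no_reach Tex ![1, 3, 0, 2] {0, 1, 3} 2 0 7 2
        (by omega) (by decide) (by decide) ⟨n, p, hp, hd⟩
    · obtain ⟨n, p, hp, hd⟩ := H {0, 3, 6} (by decide) 2
        (Gex.conn_of_list {0, 3, 6} 2 0 [(1, 1), (14, 0)] (by decide) (by decide))
      rw [h] at hp
      exact Gex.no_reach Tex ![1, 3, 0, 2] {0, 3, 6} 2 1 8 2
        (by omega) (by decide) (by decide) ⟨n, p, hp, hd⟩
    · obtain ⟨n, p, hp, hd⟩ := H {0, 1, 3} (by decide) 2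
        (Gex.conn_of_list {0, 1, 3} 2 0 [(4, 4), (5, 0)] (by decide) (by decide))
      rw [h] at hp
      exact Gex.no_reach Tex ![1, 3, 0, 2] {0, 1, 3} 2 2 6 1
        (by omega) (by decide) (by decide) ⟨n, p, hp, hd⟩
    · obtain ⟨n, p, hp, hd⟩ := H {0, 1, 3} (by decide) 2
        (Gex.conn_of_list {0, 1, 3} 2 0 [(4, 4), (5, 0)] (by decide) (by decide))
      rw [h] at hp
      exact Gex.no_reach Tex ![1, 3, 0, 2] {0, 1, 3} 2 3 5 0
        (by omega) (by decide) (by decide) ⟨n, p, hp, hd⟩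
  · intro init H
    have h4 : init 2 = 0 ∨ init 2 = 1 ∨ init 2 = 2 ∨ init 2 = 3 := by omega
    rcases h4 with h | h | h | h
    · obtain ⟨n, p, hp, hd⟩ := H {2, 3, 5} (by decide) 2
        (Gex.conn_of_list {2, 3, 5} 2 0 [(1, 1), (14, 0)] (by decide) (by decide))
      rw [h] at hp
      exact Gex.no_reach Tex ![2, 3, 1, 0] {2, 3, 5} 2 0 8 2
        (by omega) (by decide) (by decide) ⟨n, p, hp, hd⟩
    · obtain ⟨n, p, hp, hd⟩ := H {2, 3, 5} (by decide) 2
        (Gex.conn_of_list {2, 3, 5} 2 0 [(1, 1), (14, 0)] (by decide) (by decide))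
      rw [h] at hp
      exact Gex.no_reach Tex ![2, 3, 1, 0] {2, 3, 5} 2 1 8 2
        (by omega) (by decide) (by decide) ⟨n, p, hp, hd⟩
    · obtain ⟨n, p, hp, hd⟩ := H {2, 3, 5} (by decide) 2
        (Gex.conn_of_list {2, 3, 5} 2 0 [(1, 1), (14, 0)] (by decide) (by decide))
      rw [h] at hp
      exact Gex.no_reach Tex ![2, 3, 1, 0] {2, 3, 5} 2 2 8 2
        (by omega) (by decide) (by decide) ⟨n, p, hp, hd⟩
    · obtain ⟨n, p, hp, hd⟩ := H {2, 3, 5} (by decide) 2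
        (Gex.conn_of_list {2, 3, 5} 2 0 [(1, 1), (14, 0)] (by decide) (by decide))
      rw [h] at hp
      exact Gex.no_reach Tex ![2, 3, 1, 0] {2, 3, 5} 2 3 6 0
        (by omega) (by decide) (by decide) ⟨n, p, hp, hd⟩
  · intro init H
    have h4 : init 2 = 0 ∨ init 2 = 1 ∨ init 2 = 2 ∨ init 2 = 3 := by omega
    rcases h4 with h | h | h | h
    · obtain ⟨n, p, hp, hd⟩ := H {3, 5, 6} (by decide) 2
        (Gex.conn_of_list {3, 5, 6} 2 0 [(1, 1), (14, 0)] (by decide) (by decide))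
      rw [h] at hp
      exact Gex.no_reach Tex ![2, 0, 3, 1] {3, 5, 6} 2 0 8 4
        (by omega) (by decide) (by decide) ⟨n, p, hp, hd⟩
    · obtain ⟨n, p, hp, hd⟩ := H {3, 5, 6} (by decide) 2
        (Gex.conn_of_list {3, 5, 6} 2 0 [(1, 1), (14, 0)] (by decide) (by decide))
      rw [h] at hp
      exact Gex.no_reach Tex ![2, 0, 3, 1] {3, 5, 6} 2 1 6 2
        (by omega) (by decide) (by decide) ⟨n, p, hp, hd⟩
    · obtain ⟨n, p, hp, hd⟩ := H {3, 5, 6} (by decide) 2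
        (Gex.conn_of_list {3, 5, 6} 2 0 [(1, 1), (14, 0)] (by decide) (by decide))
      rw [h] at hp
      exact Gex.no_reach Tex ![2, 0, 3, 1] {3, 5, 6} 2 2 6 2
        (by omega) (by decide) (by decide) ⟨n, p, hp, hd⟩
    · obtain ⟨n, p, hp, hd⟩ := H {3, 5, 6} (by decide) 2
        (Gex.conn_of_list {3, 5, 6} 2 0 [(1, 1), (14, 0)] (by decide) (by decide))
      rw [h] at hp
      exact Gex.no_reach Tex ![2, 0, 3, 1] {3, 5, 6} 2 3 6 2
        (by omega) (by decide) (by decide) ⟨n, p, hp, hd⟩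
  · intro init H
    have h4 : init 2 = 0 ∨ init 2 = 1 ∨ init 2 = 2 ∨ init 2 = 3 := by omega
    rcases h4 with h | h | h | h
    · obtain ⟨n, p, hp, hd⟩ := H {0, 1, 3} (by decide) 2
        (Gex.conn_of_list {0, 1, 3} 2 0 [(4, 4), (5, 0)] (by decide) (by decide))
      rw [h] at hp
      exact Gex.no_reach Tex ![3, 2, 0, 1] {0, 1, 3} 2 0 7 2
        (by omega) (by decide) (by decide) ⟨n, p, hp, hd⟩
    · obtain ⟨n, p, hp, hd⟩ := H {0, 1, 3} (by decide) 2
        (Gex.conn_of_list {0, 1, 3} 2 0 [(4, 4), (5, 0)] (by decide) (by decide))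
      rw [h] at hp
      exact Gex.no_reach Tex ![3, 2, 0, 1] {0, 1, 3} 2 1 6 1
        (by omega) (by decide) (by decide) ⟨n, p, hp, hd⟩
    · obtain ⟨n, p, hp, hd⟩ := H {0, 1, 3} (by decide) 2
        (Gex.conn_of_list {0, 1, 3} 2 0 [(4, 4), (5, 0)] (by decide) (by decide))
      rw [h] at hp
      exact Gex.no_reach Tex ![3, 2, 0, 1] {0, 1, 3} 2 2 7 2
        (by omega) (by decide) (by decide) ⟨n, p, hp, hd⟩
    · obtain ⟨n, p, hp, hd⟩ := H {0, 1, 3} (by decide) 2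
        (Gex.conn_of_list {0, 1, 3} 2 0 [(4, 4), (5, 0)] (by decide) (by decide))
      rw [h] at hp
      exact Gex.no_reach Tex ![3, 2, 0, 1] {0, 1, 3} 2 3 5 0
        (by omega) (by decide) (by decide) ⟨n, p, hp, hd⟩
  · intro init H
    have h4 : init 1 = 0 ∨ init 1 = 1 ∨ init 1 = 2 ∨ init 1 = 3 := by omega
    rcases h4 with h | h | h | h
    · obtain ⟨n, p, hp, hd⟩ := H {6, 12, 14} (by decide) 1
        (Gex.conn_of_list {6, 12, 14} 1 0 [(2, 4), (5, 0)] (by decide) (by decide))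
      rw [h] at hp
      exact Gex.no_reach Tex ![3, 0, 1, 2] {6, 12, 14} 1 0 6 1
        (by omega) (by decide) (by decide) ⟨n, p, hp, hd⟩
    · obtain ⟨n, p, hp, hd⟩ := H {6, 12, 14} (by decide) 1
        (Gex.conn_of_list {6, 12, 14} 1 0 [(2, 4), (5, 0)] (by decide) (by decide))
      rw [h] at hp
      exact Gex.no_reach Tex ![3, 0, 1, 2] {6, 12, 14} 1 1 5 0
        (by omega) (by decide) (by decide) ⟨n, p, hp, hd⟩
    · obtain ⟨n, p, hp, hd⟩ := H {6, 12, 14} (by decide) 1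
        (Gex.conn_of_list {6, 12, 14} 1 0 [(2, 4), (5, 0)] (by decide) (by decide))
      rw [h] at hp
      exact Gex.no_reach Tex ![3, 0, 1, 2] {6, 12, 14} 1 2 5 0
        (by omega) (by decide) (by decide) ⟨n, p, hp, hd⟩
    · obtain ⟨n, p, hp, hd⟩ := H {6, 12, 14} (by decide) 1
        (Gex.conn_of_list {6, 12, 14} 1 0 [(2, 4), (5, 0)] (by decide) (by decide))
      rw [h] at hp
      exact Gex.no_reach Tex ![3, 0, 1, 2] {6, 12, 14} 1 3 6 1
        (by omega) (by decide) (by decide) ⟨n, p, hp, hd⟩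

end Srr
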